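/- Leading-order phase error of the predictor–corrector scheme: Let c > 0, ℵ > 0, θ ∈ [0,1], ς ∈ ℝ. Let φ(ξ) = cℵ·ξ/√(1 + ς²ξ²/3) be the exact phase shift, and let φ̂(ξ) = arccos(A(ξ)/|ρ(ξ)|) be the discrete phase shift, where for ξ ∈ (0,π): ζ(ξ) = sin²(ξ/2), ħ(ξ) = 1 + (4ς²/3)ζ(ξ), 𝔡(ξ) = 4c²ℵ²ζ(ξ), β(ξ) = cℵ·sin ξ, A(ξ) = 1 − 𝔡(ξ)(1+θ)/(2ħ(ξ)), |ρ(ξ)| = √(A(ξ)² + β(ξ)²/ħ(ξ)). Then the phase error Δφ(ξ) = φ(ξ) − φ̂(ξ) satisfies, as ξ → 0⁺, Δφ(ξ) + (cℵ/6)·((cℵ)²(3θ + 1) − 1)·ξ³ = O(ξ⁴). In particular, if cℵ = 1/√(1 + 3θ), then Δφ(ξ) = O(ξ⁴) as ξ → 0⁺. -/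

import Mathlib

/-!
With `a = cℵ`, the transmission factor `ρ = A + i a sin ξ / √ħ` has real part `A → 1` as
`ξ → 0`, so near `0⁺` the discrete phase is `φ̂ = arctan t` with `t = a sin ξ / (√ħ A)`.
Every factor has an explicit expansion with `O(ξ⁴)` remainder: `sin² (ξ/2) = ξ²/4 + O(ξ⁴)` by the
cosine bound, both `1/√ħ` and `1/√(1 + ς²ξ²/3)` equal `1 - ς²ξ²/6 + O(ξ⁴)`, and
`1/A = 1 + a²(1+θ)ξ²/2 + O(ξ⁴)`. Hence `t = aξ + a(a²(1+θ)/2 - 1/6 - ς²/6)ξ³ + O(ξ⁴)`, and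
inserting this into `arctan t = t - t³/3 + O(t⁵)` the `ς²` terms cancel against those of `φ`,
leaving `φ - φ̂ = -(a/6)(a²(3θ+1) - 1)ξ³ + O(ξ⁴)`.
-/

open Filter Asymptotics Topology Real

section

variable {α 𝕜 : Type*} [NormedField 𝕜] {l : Filter α}

theorem Asymptotics.IsBigO.mul_sub_mul {f₁ f₂ g₁ g₂ : α → 𝕜} {k : α → ℝ}
    (h₁ : (fun x => f₁ x - g₁ x) =O[l] k) (h₂ : (fun x => f₂ x - g₂ x) =O[l] k)
    (hf₂ : f₂ =O[l] fun _ => (1 : ℝ)) (hg₁ : g₁ =O[l] fun _ => (1 : ℝ)) :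
    (fun x => f₁ x * f₂ x - g₁ x * g₂ x) =O[l] k := by
  have h₁' := h₁.mul hf₂
  have h₂' := hg₁.mul h₂
  simp only [mul_one, one_mul] at h₁' h₂'
  exact (h₁'.add h₂').congr_left fun x => by ring

theorem Asymptotics.IsBigO.pow_sub_pow {f g : α → 𝕜} {k : α → ℝ}
    (h : (fun x => f x - g x) =O[l] k) (hf : f =O[l] fun _ => (1 : ℝ))
    (hg : g =O[l] fun _ => (1 : ℝ)) (n : ℕ) :
    (fun x => f x ^ n - g x ^ n) =O[l] k := by
  induction n with
  | zero => simpa using isBigO_zero k l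
  | succ n ih =>
    simpa only [pow_succ] using ih.mul_sub_mul h hf (by simpa using hg.pow n)

theorem isBigO_inv_one_sub_sub_one_add {u : α → 𝕜} (hu : Tendsto u l (𝓝 0)) :
    (fun x => (1 - u x)⁻¹ - (1 + u x)) =O[l] fun x => u x ^ 2 := by
  have hinv : Tendsto (fun x => (1 - u x)⁻¹) l (𝓝 1) := by
    simpa using (tendsto_const_nhds.sub hu).inv₀ (by simp : (1 : 𝕜) - 0 ≠ 0)
  have h := (isBigO_refl (fun x => u x ^ 2) l).mul (hinv.isBigO_one 𝕜)
  simp only [mul_one] at h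
  refine h.congr' ?_ EventuallyEq.rfl
  filter_upwards [hu.eventually_ne (zero_ne_one (α := 𝕜))] with x hx
  have : 1 - u x ≠ 0 := sub_ne_zero.2 (Ne.symm hx)
  field_simp
  ring

end

theorem abs_inv_sqrt_one_add_sub_le {u : ℝ} (hu : 0 ≤ u) :
    |(√(1 + u))⁻¹ - (1 - u / 2)| ≤ u ^ 2 := by
  set q := √(1 + u)
  have hq1 : 1 ≤ q := one_le_sqrt.2 (by linarith)
  have hqsq : q ^ 2 = 1 + u := sq_sqrt (by linarith)
  have hid : q⁻¹ - (1 - u / 2) = (q - 1) ^ 2 * (q + 2) / (2 * q) := by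
    field_simp
    nlinarith
  rw [hid, abs_of_nonneg (by positivity), div_le_iff₀ (by positivity)]
  have hu' : u = (q - 1) * (q + 1) := by nlinarith
  rw [hu']
  nlinarith [sq_nonneg (q - 1), mul_nonneg (sq_nonneg (q - 1)) (sub_nonneg.2 hq1)]

namespace Real

theorem isBigO_sin_sub_taylor : (fun x => sin x - (x - x ^ 3 / 6)) =O[𝓝 0] fun x => x ^ 5 := by
  refine IsBigO.of_bound (1 / 100) ?_
  filter_upwards [Metric.closedBall_mem_nhds (0 : ℝ) one_pos] with x hx
  have hx : |x| ≤ 1 := by simpa using hx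
  simpa [norm_pow, div_eq_mul_inv, mul_comm] using sin_bound hx

theorem isBigO_cos_sub_taylor : (fun x => cos x - (1 - x ^ 2 / 2)) =O[𝓝 0] fun x => x ^ 4 := by
  refine IsBigO.of_bound (5 / 96) ?_
  filter_upwards [Metric.closedBall_mem_nhds (0 : ℝ) one_pos] with x hx
  have hx : |x| ≤ 1 := by simpa using hx
  simpa [norm_pow, mul_comm] using cos_bound hx

theorem abs_arctan_sub_taylor_le (x : ℝ) : |arctan x - (x - x ^ 3 / 3)| ≤ |x| ^ 5 := by
  let F : ℝ → ℝ := fun y => arctan y - (y - y ^ 3 / 3)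
  have hF : ∀ y, HasDerivAt F (y ^ 4 / (1 + y ^ 2)) y := fun y => by
    refine ((hasDerivAt_arctan y).fun_sub ((hasDerivAt_id' y).fun_sub
      ((hasDerivAt_pow 3 y).div_const 3))).congr_deriv ?_
    have : (1 : ℝ) + y ^ 2 ≠ 0 := by positivity
    field_simp
    ring
  have hbound : ∀ y ∈ Metric.closedBall (0 : ℝ) |x|, ‖y ^ 4 / (1 + y ^ 2)‖ ≤ |x| ^ 4 := by
    intro y hy
    have hy : |y| ≤ |x| := by simpa using hy
    rw [norm_div, norm_eq_abs, norm_eq_abs, abs_of_pos (by positivity : 0 < 1 + y ^ 2)]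
    calc |y ^ 4| / (1 + y ^ 2) ≤ |y ^ 4| := div_le_self (abs_nonneg _) (by nlinarith)
      _ = |y| ^ 4 := abs_pow y 4
      _ ≤ |x| ^ 4 := pow_le_pow_left₀ (abs_nonneg y) hy 4
  have h := Convex.norm_image_sub_le_of_norm_hasDerivWithin_le
    (fun y _ => (hF y).hasDerivWithinAt) hbound (convex_closedBall 0 |x|)
    (Metric.mem_closedBall_self (abs_nonneg x)) (by simp : x ∈ Metric.closedBall (0 : ℝ) |x|)
  simpa [F, ← pow_succ] using h

theorem isBigO_sin_half_sq_sub :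
    (fun ξ => sin (ξ / 2) ^ 2 - 1 / 4 * ξ ^ 2) =O[𝓝 0] fun ξ => ξ ^ 4 :=
  (isBigO_cos_sub_taylor.const_mul_left (-1 / 2)).congr_left fun ξ => by
    rw [sin_sq_eq_half_sub, mul_div_cancel₀ ξ two_ne_zero]
    ring

theorem arccos_div_sqrt_sq_add_sq {x y : ℝ} (hx : 0 < x) (hy : 0 ≤ y) :
    arccos (x / √(x ^ 2 + y ^ 2)) = arctan (y / x) := by
  have hcos : cos (arctan (y / x)) = x / √(x ^ 2 + y ^ 2) := by
    rw [cos_arctan, div_pow, one_add_div (by positivity), sqrt_div' _ (by positivity),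
      sqrt_sq hx.le, one_div_div]
  rw [← hcos, arccos_cos (arctan_nonneg.2 (by positivity))
    ((arctan_lt_pi_div_two _).le.trans (by linarith [pi_pos]))]

end Real

theorem isBigO_sq_of_isBigO_sub {u : ℝ → ℝ} {m : ℝ}
    (h : (fun ξ => u ξ - m * ξ ^ 2) =O[𝓝 0] fun ξ => ξ ^ 4) : u =O[𝓝 0] fun ξ => ξ ^ 2 :=
  ((h.trans (isLittleO_pow_pow (by norm_num)).isBigO).add
    ((isBigO_refl (fun ξ : ℝ => ξ ^ 2) _).const_mul_left m)).congr_left fun ξ => by ring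

theorem isBigO_inv_sqrt_one_add_sub {u : ℝ → ℝ} {m : ℝ} (hu : ∀ᶠ ξ in 𝓝 0, 0 ≤ u ξ)
    (h : (fun ξ => u ξ - m * ξ ^ 2) =O[𝓝 0] fun ξ => ξ ^ 4) :
    (fun ξ => (√(1 + u ξ))⁻¹ - (1 - m / 2 * ξ ^ 2)) =O[𝓝 0] fun ξ => ξ ^ 4 := by
  have hsqrt : (fun ξ => (√(1 + u ξ))⁻¹ - (1 - u ξ / 2)) =O[𝓝 0] fun ξ => u ξ ^ 2 := by
    refine IsBigO.of_bound 1 ?_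
    filter_upwards [hu] with ξ hξ
    simpa using abs_inv_sqrt_one_add_sub_le hξ
  have hu2 : (fun ξ => u ξ ^ 2) =O[𝓝 0] fun ξ => ξ ^ 4 := by
    simpa [← pow_mul] using (isBigO_sq_of_isBigO_sub h).pow 2
  exact ((hsqrt.trans hu2).sub (h.const_mul_left (1 / 2))).congr_left fun ξ => by ring

theorem isBigO_inv_one_sub_sub {u : ℝ → ℝ} {m : ℝ}
    (h : (fun ξ => u ξ - m * ξ ^ 2) =O[𝓝 0] fun ξ => ξ ^ 4) :
    (fun ξ => (1 - u ξ)⁻¹ - (1 + m * ξ ^ 2)) =O[𝓝 0] fun ξ => ξ ^ 4 := by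
  have hu := isBigO_sq_of_isBigO_sub h
  have hu0 : Tendsto u (𝓝 0) (𝓝 0) :=
    hu.trans_tendsto (by simpa using (continuous_pow 2).tendsto (0 : ℝ))
  have hu2 : (fun ξ => u ξ ^ 2) =O[𝓝 0] fun ξ => ξ ^ 4 := by
    simpa [← pow_mul] using hu.pow 2
  exact (((isBigO_inv_one_sub_sub_one_add hu0).trans hu2).add h).congr_left fun ξ => by ring

theorem isBigO_pow_mul_of_continuous (n : ℕ) {g : ℝ → ℝ} (hg : Continuous g) :
    (fun ξ => ξ ^ n * g ξ) =O[𝓝 0] fun ξ => ξ ^ n := by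
  simpa using (isBigO_refl (fun ξ : ℝ => ξ ^ n) _).mul ((hg.tendsto 0).isBigO_one ℝ)

namespace PredictorCorrector

noncomputable section

variable (a θ ς : ℝ)

-- `a` stands for `cℵ`; `rhoRe` is `Re ρ` and `tanPhase` is `Im ρ / Re ρ`.
def hbar (ξ : ℝ) : ℝ := 1 + 4 * ς ^ 2 / 3 * sin (ξ / 2) ^ 2

def rhoRe (ξ : ℝ) : ℝ := 1 - 4 * a ^ 2 * sin (ξ / 2) ^ 2 * (1 + θ) / (2 * hbar ς ξ)

def tanPhase (ξ : ℝ) : ℝ := a * sin ξ * (√(hbar ς ξ))⁻¹ * (rhoRe a θ ς ξ)⁻¹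

theorem one_le_hbar (ξ : ℝ) : 1 ≤ hbar ς ξ :=
  le_add_of_nonneg_right (by positivity)

theorem isBigO_inv_hbar_one : (fun ξ => (hbar ς ξ)⁻¹) =O[𝓝 0] fun _ => (1 : ℝ) :=
  IsBigO.of_bound 1 <| .of_forall fun ξ => by
    simpa [abs_of_pos (zero_lt_one.trans_le (one_le_hbar ς ξ))] using
      inv_le_one_of_one_le₀ (one_le_hbar ς ξ)

theorem isBigO_inv_sqrt_hbar_one :
    (fun ξ => (√(hbar ς ξ))⁻¹) =O[𝓝 0] fun _ => (1 : ℝ) :=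
  IsBigO.of_bound 1 <| .of_forall fun ξ => by
    simpa [abs_of_nonneg (sqrt_nonneg _)] using
      inv_le_one_of_one_le₀ (one_le_sqrt.2 (one_le_hbar ς ξ))

theorem isBigO_inv_sqrt_hbar_sub :
    (fun ξ => (√(hbar ς ξ))⁻¹ - (1 - ς ^ 2 / 3 / 2 * ξ ^ 2)) =O[𝓝 0] fun ξ => ξ ^ 4 :=
  isBigO_inv_sqrt_one_add_sub (.of_forall fun ξ => by positivity)
    ((isBigO_sin_half_sq_sub.const_mul_left (4 * ς ^ 2 / 3)).congr_left fun ξ => by ring)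

theorem tendsto_rhoRe : Tendsto (rhoRe a θ ς) (𝓝 0) (𝓝 1) := by
  have hcont : Continuous (rhoRe a θ ς) :=
    continuous_const.sub <| (by fun_prop : Continuous _).div (by unfold hbar; fun_prop)
      fun ξ => by linarith [one_le_hbar ς ξ]
  simpa [rhoRe, hbar] using hcont.tendsto 0

theorem isBigO_inv_rhoRe_one :
    (fun ξ => (rhoRe a θ ς ξ)⁻¹) =O[𝓝 0] fun _ => (1 : ℝ) :=
  ((tendsto_rhoRe a θ ς).inv₀ one_ne_zero).isBigO_one ℝ

theorem isBigO_inv_rhoRe_sub :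
    (fun ξ => (rhoRe a θ ς ξ)⁻¹ - (1 + a ^ 2 * (1 + θ) / 2 * ξ ^ 2))
      =O[𝓝 0] fun ξ => ξ ^ 4 := by
  refine isBigO_inv_one_sub_sub ?_
  have hζ := isBigO_sin_half_sq_sub
  have hξζ : (fun ξ => ξ ^ 2 * sin (ξ / 2) ^ 2) =O[𝓝 0] fun ξ => ξ ^ 4 :=
    ((isBigO_refl (fun ξ : ℝ => ξ ^ 2) _).mul (isBigO_sq_of_isBigO_sub hζ)).congr_right
      fun ξ => by ring
  have h := (((hζ.sub (hξζ.const_mul_left (ς ^ 2 / 3))).mul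
    (isBigO_inv_hbar_one ς)).const_mul_left (2 * a ^ 2 * (1 + θ)))
  simp only [mul_one] at h
  refine h.congr_left fun ξ => ?_
  have : hbar ς ξ ≠ 0 := (zero_lt_one.trans_le (one_le_hbar ς ξ)).ne'
  field_simp
  unfold hbar
  ring

theorem isBigO_tanPhase : tanPhase a θ ς =O[𝓝 0] fun ξ => ξ := by
  have hsin : (fun ξ => sin ξ) =O[𝓝 0] fun ξ => ξ :=
    isBigO_of_le _ fun ξ => by simpa using abs_sin_le_abs
  have h := ((hsin.const_mul_left a).mul (isBigO_inv_sqrt_hbar_one ς)).mul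
    (isBigO_inv_rhoRe_one a θ ς)
  simp only [mul_one] at h
  exact h

theorem isBigO_tanPhase_sub :
    (fun ξ => tanPhase a θ ς ξ - (a * ξ + a * (a ^ 2 * (1 + θ) / 2 - 1 / 6 - ς ^ 2 / 6) * ξ ^ 3))
      =O[𝓝 0] fun ξ => ξ ^ 4 := by
  have hsin : (fun ξ => sin ξ - (ξ - ξ ^ 3 / 6)) =O[𝓝 0] fun ξ => ξ ^ 4 :=
    isBigO_sin_sub_taylor.trans (isLittleO_pow_pow (by norm_num)).isBigO
  have h := (hsin.mul_sub_mul (isBigO_inv_sqrt_hbar_sub ς) (isBigO_inv_sqrt_hbar_one ς)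
    ((Continuous.tendsto (by fun_prop) 0).isBigO_one ℝ)).mul_sub_mul
    (isBigO_inv_rhoRe_sub a θ ς) (isBigO_inv_rhoRe_one a θ ς)
    ((Continuous.tendsto (by fun_prop) 0).isBigO_one ℝ)
  have hpoly := isBigO_pow_mul_of_continuous 4 (g := fun ξ =>
    ξ * (a ^ 2 * (1 + θ) / 2 * ς ^ 2 / 36 * ξ ^ 2 - a ^ 2 * (1 + θ) / 2 * (1 / 6 + ς ^ 2 / 6)
      + ς ^ 2 / 36)) (by fun_prop)
  exact ((h.add hpoly).const_mul_left a).congr_left fun ξ => by unfold tanPhase; ring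

theorem isBigO_phase_error :
    (fun ξ => a * ξ / √(1 + ς ^ 2 * ξ ^ 2 / 3) - arctan (tanPhase a θ ς ξ)
      + a / 6 * (a ^ 2 * (3 * θ + 1) - 1) * ξ ^ 3) =O[𝓝 0] fun ξ => ξ ^ 4 := by
  set t := tanPhase a θ ς
  set c := a ^ 2 * (1 + θ) / 2 - 1 / 6 - ς ^ 2 / 6
  set L : ℝ → ℝ := fun ξ => a * ξ + a * c * ξ ^ 3
  have hexact : (fun ξ => a * ξ / √(1 + ς ^ 2 * ξ ^ 2 / 3)
      - a * ξ * (1 - ς ^ 2 / 3 / 2 * ξ ^ 2)) =O[𝓝 0] fun ξ => ξ ^ 4 := by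
    have h := isBigO_inv_sqrt_one_add_sub (u := fun ξ => ς ^ 2 * ξ ^ 2 / 3) (m := ς ^ 2 / 3)
      (.of_forall fun ξ => by positivity) ((isBigO_zero _ _).congr_left fun ξ => by ring)
    have h' := ((Continuous.tendsto (by fun_prop : Continuous fun ξ : ℝ => a * ξ) 0).isBigO_one
      ℝ).mul h
    simp only [one_mul] at h'
    exact h'.congr_left fun ξ => by ring
  have harctan : (fun ξ => arctan (t ξ) - (t ξ - t ξ ^ 3 / 3)) =O[𝓝 0] fun ξ => ξ ^ 4 :=
    ((IsBigO.of_bound 1 (.of_forall fun ξ => by simpa using abs_arctan_sub_taylor_le (t ξ))).trans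
      ((isBigO_tanPhase a θ ς).pow 5)).trans (isLittleO_pow_pow (by norm_num)).isBigO
  have hcubic : (fun ξ => (t ξ - t ξ ^ 3 / 3) - (L ξ - L ξ ^ 3 / 3)) =O[𝓝 0] fun ξ => ξ ^ 4 := by
    have h : (fun ξ => t ξ - L ξ) =O[𝓝 0] fun ξ => ξ ^ 4 := isBigO_tanPhase_sub a θ ς
    have ht : t =O[𝓝 0] fun _ => (1 : ℝ) :=
      (isBigO_tanPhase a θ ς).trans ((continuous_id.tendsto 0).isBigO_one ℝ)
    have hL : L =O[𝓝 0] fun _ => (1 : ℝ) := (Continuous.tendsto (by fun_prop) 0).isBigO_one ℝ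
    exact (h.sub ((h.pow_sub_pow ht hL 3).const_mul_left (1 / 3))).congr_left fun ξ => by ring
  have hpoly := isBigO_pow_mul_of_continuous 4
    (g := fun ξ => a ^ 3 * ξ * (c + c ^ 2 * ξ ^ 2 + c ^ 3 * ξ ^ 4 / 3)) (by fun_prop)
  exact ((hexact.sub (harctan.add hcubic)).add hpoly).congr_left fun ξ => by ring

theorem arccos_eq_arctan_tanPhase {ξ : ℝ} (ha : 0 ≤ a) (hξ : 0 ≤ sin ξ)
    (hA : 0 < rhoRe a θ ς ξ) :
    arccos (rhoRe a θ ς ξ / √(rhoRe a θ ς ξ ^ 2 + (a * sin ξ) ^ 2 / hbar ς ξ))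
      = arctan (tanPhase a θ ς ξ) := by
  have hy : (a * sin ξ) ^ 2 / hbar ς ξ = (a * sin ξ * (√(hbar ς ξ))⁻¹) ^ 2 := by
    rw [mul_pow (a * sin ξ), inv_pow, sq_sqrt (zero_le_one.trans (one_le_hbar ς ξ)),
      div_eq_mul_inv]
  rw [hy, arccos_div_sqrt_sq_add_sq hA (by positivity), div_eq_mul_inv, tanPhase]

end

end PredictorCorrector

open PredictorCorrector in
theorem phase_error_leading_order_general
    (c al θ ς : ℝ) (hc : 0 < c) (hal : 0 < al)
    (φ φd : ℝ → ℝ)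
    (hφ : ∀ ξ : ℝ, φ ξ = c * al * ξ / Real.sqrt (1 + ς ^ 2 * ξ ^ 2 / 3))
    (hφd : ∀ ξ ∈ Set.Ioo (0 : ℝ) Real.pi,
      φd ξ =
        Real.arccos ((1 - (4 * c ^ 2 * al ^ 2 * Real.sin (ξ / 2) ^ 2) * (1 + θ)
            / (2 * (1 + 4 * ς ^ 2 / 3 * Real.sin (ξ / 2) ^ 2)))
          / Real.sqrt ((1 - (4 * c ^ 2 * al ^ 2 * Real.sin (ξ / 2) ^ 2) * (1 + θ)
              / (2 * (1 + 4 * ς ^ 2 / 3 * Real.sin (ξ / 2) ^ 2))) ^ 2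
            + (c * al * Real.sin ξ) ^ 2
              / (1 + 4 * ς ^ 2 / 3 * Real.sin (ξ / 2) ^ 2)))) :
    ((fun ξ : ℝ =>
        (φ ξ - φd ξ) + (c * al / 6) * ((c * al) ^ 2 * (3 * θ + 1) - 1) * ξ ^ 3)
      =O[𝓝[>] (0 : ℝ)] (fun ξ : ℝ => ξ ^ 4)) ∧
    (c * al = 1 / Real.sqrt (1 + 3 * θ) →
      (fun ξ : ℝ => φ ξ - φd ξ) =O[𝓝[>] (0 : ℝ)] (fun ξ : ℝ => ξ ^ 4)) := by
  have ha : 0 < c * al := mul_pos hc hal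
  have hφd' : ∀ᶠ ξ in 𝓝[>] 0, φd ξ = arctan (tanPhase (c * al) θ ς ξ) := by
    filter_upwards [Ioo_mem_nhdsGT pi_pos, nhdsWithin_le_nhds
      ((tendsto_rhoRe (c * al) θ ς).eventually (lt_mem_nhds one_pos))] with ξ hξ hA
    have hreal : 1 - 4 * c ^ 2 * al ^ 2 * sin (ξ / 2) ^ 2 * (1 + θ)
        / (2 * (1 + 4 * ς ^ 2 / 3 * sin (ξ / 2) ^ 2)) = rhoRe (c * al) θ ς ξ := by
      unfold rhoRe hbar; ring
    rw [hφd ξ hξ, hreal]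
    exact arccos_eq_arctan_tanPhase _ θ ς ha.le
      (sin_nonneg_of_nonneg_of_le_pi hξ.1.le hξ.2.le) hA
  have hmain : (fun ξ => (φ ξ - φd ξ) + (c * al / 6) * ((c * al) ^ 2 * (3 * θ + 1) - 1) * ξ ^ 3)
      =O[𝓝[>] 0] fun ξ => ξ ^ 4 :=
    ((isBigO_phase_error (c * al) θ ς).mono nhdsWithin_le_nhds).congr'
      (hφd'.mono fun ξ h => by simp only [hφ, h]) .rfl
  refine ⟨hmain, fun hK => ?_⟩
  have hsqrt : 0 < √(1 + 3 * θ) := one_div_pos.1 (hK ▸ ha)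
  have hθ : 0 < 1 + 3 * θ := sqrt_pos.1 hsqrt
  have hK' : (c * al) ^ 2 * (3 * θ + 1) = 1 := by
    rw [hK, div_pow, sq_sqrt hθ.le]
    field_simp
    ring
  simpa [hK'] using hmain

/-- Leading-order phase error of the predictor–corrector scheme:
`Δφ(ξ) = φ(ξ) − φ̂(ξ) = −(cℵ/6)((cℵ)²(3θ+1) − 1)ξ³ + O(ξ⁴)` as `ξ → 0⁺`;
in particular, if `cℵ = 1/√(1+3θ)` then `Δφ(ξ) = O(ξ⁴)`. -/
theorem phase_error_leading_order
    (c al θ ς : ℝ) (hc : 0 < c) (hal : 0 < al) (hθ : θ ∈ Set.Icc (0 : ℝ) 1)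
    (φ φd : ℝ → ℝ)
    (hφ : ∀ ξ : ℝ, φ ξ = c * al * ξ / Real.sqrt (1 + ς ^ 2 * ξ ^ 2 / 3))
    (hφd : ∀ ξ ∈ Set.Ioo (0 : ℝ) Real.pi,
      φd ξ =
        Real.arccos ((1 - (4 * c ^ 2 * al ^ 2 * Real.sin (ξ / 2) ^ 2) * (1 + θ)
            / (2 * (1 + 4 * ς ^ 2 / 3 * Real.sin (ξ / 2) ^ 2)))
          / Real.sqrt ((1 - (4 * c ^ 2 * al ^ 2 * Real.sin (ξ / 2) ^ 2) * (1 + θ)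
              / (2 * (1 + 4 * ς ^ 2 / 3 * Real.sin (ξ / 2) ^ 2))) ^ 2
            + (c * al * Real.sin ξ) ^ 2
              / (1 + 4 * ς ^ 2 / 3 * Real.sin (ξ / 2) ^ 2)))) :
    ((fun ξ : ℝ =>
        (φ ξ - φd ξ) + (c * al / 6) * ((c * al) ^ 2 * (3 * θ + 1) - 1) * ξ ^ 3)
      =O[𝓝[>] (0 : ℝ)] (fun ξ : ℝ => ξ ^ 4)) ∧
    (c * al = 1 / Real.sqrt (1 + 3 * θ) →
      (fun ξ : ℝ => φ ξ - φd ξ) =O[𝓝[>] (0 : ℝ)] (fun ξ : ℝ => ξ ^ 4)) :=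
  phase_error_leading_order_general c al θ ς hc hal φ φd hφ hφd
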